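/- arXiv:2304.08558 — 2 statements merged into one kernel-verified Lean document; each statement's English description precedes it below -/
import Mathlib

section
/- With the recursive admittances Yₙ of the real-variable fractal ladder defined by Y₁(s) = 1/b + 1/(a·s) and Yₙ₊₁(s) = 1/b + 1/(a·s + 1/(σ·Yₙ(σ²s))) for a, b, σ, s > 0, the sequence (Yₙ(s))ₙ is monotone decreasing in n for each fixed s > 0. -/
/-!
Write `Yₙ₊₁(s) = 1/b + 1/(a s + 1/(σ Yₙ(σ² s)))`. For positive arguments the map
`y ↦ 1/(c + 1/y)` is increasing, so `Yₙ(σ² s) ≥ Yₙ₊₁(σ² s)` propagates to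
`Yₙ₊₁(s) ≥ Yₙ₊₂(s)`; an induction on `n`, uniform in `s > 0`, reduces everything to
`Y₂ ≤ Y₁`, which holds because `a s + 1/(σ Y₁(σ² s)) ≥ a s`.
-/

lemma one_div_add_one_div_le_of_le {c x y : ℝ} (hc : 0 ≤ c) (hx : 0 < x) (hxy : x ≤ y) :
    1 / (c + 1 / x) ≤ 1 / (c + 1 / y) :=
  have hy : 0 < y := hx.trans_le hxy
  one_div_le_one_div_of_le (by positivity) (add_le_add_right (one_div_le_one_div_of_le hx hxy) c)

section Ladder

variable {a b σ : ℝ} (ha : 0 < a) (hb : 0 < b) (hσ : 0 < σ) {Y : ℕ → ℝ → ℝ}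
  (hY1 : ∀ s : ℝ, Y 1 s = 1 / b + 1 / (a * s))
  (hYrec : ∀ n ≥ 1, ∀ s : ℝ, Y (n + 1) s = 1 / b + 1 / (a * s + 1 / (σ * Y n (σ ^ 2 * s))))
include ha hb hσ hY1 hYrec

lemma ladder_admittance_pos {n : ℕ} (hn : 1 ≤ n) : ∀ s : ℝ, 0 < s → 0 < Y n s := by
  induction n, hn using Nat.le_induction with
  | base =>
    intro s hs
    rw [hY1]
    positivity
  | succ n hn ih =>
    intro s hs
    have := ih (σ ^ 2 * s) (by positivity)
    rw [hYrec n hn s]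
    positivity

lemma ladder_admittance_succ_le {n : ℕ} (hn : 1 ≤ n) : ∀ s : ℝ, 0 < s → Y (n + 1) s ≤ Y n s := by
  induction n, hn using Nat.le_induction with
  | base =>
    intro s hs
    have hY : 0 < Y 1 (σ ^ 2 * s) :=
      ladder_admittance_pos ha hb hσ hY1 hYrec le_rfl _ (by positivity)
    rw [hYrec 1 le_rfl s, hY1 s]
    have hle : a * s ≤ a * s + 1 / (σ * Y 1 (σ ^ 2 * s)) := le_add_of_nonneg_right (by positivity)
    exact add_le_add_right (one_div_le_one_div_of_le (by positivity) hle) _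
  | succ n hn ih =>
    intro s hs
    have hs' : 0 < σ ^ 2 * s := by positivity
    have hY : 0 < Y (n + 1) (σ ^ 2 * s) :=
      ladder_admittance_pos ha hb hσ hY1 hYrec (hn.trans n.le_succ) _ hs'
    rw [hYrec (n + 1) (hn.trans n.le_succ) s, hYrec n hn s]
    exact add_le_add_right (one_div_add_one_div_le_of_le (by positivity) (by positivity)
      (mul_le_mul_of_nonneg_left (ih _ hs') hσ.le)) _

end Ladder

theorem ladder_admittance_antitone (a b σ : ℝ) (ha : 0 < a) (hb : 0 < b) (hσ : 0 < σ)
    (Y : ℕ → ℝ → ℝ)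
    (hY1 : ∀ s : ℝ, Y 1 s = 1 / b + 1 / (a * s))
    (hYrec : ∀ n ≥ 1, ∀ s : ℝ, Y (n + 1) s = 1 / b + 1 / (a * s + 1 / (σ * Y n (σ ^ 2 * s)))) :
    ∀ s : ℝ, 0 < s → ∀ n ≥ 1, Y (n + 1) s ≤ Y n s :=
  fun s hs _ hn => ladder_admittance_succ_le ha hb hσ hY1 hYrec hn s hs
end

section
/- For a fractal diagram with parameters σ, ρ = σ⁻¹ and decorations aᵢ = σ^(i−1)a₁ (inertances), bᵢ = σ^(1−i)b₁ (resistances), the finite admittance satisfies Yₙ(F(σa₁, σ⁻¹b₁, ...))(ω) = σ·Yₙ(F(a₁, b₁, ...))(σ²ω) for every finite depth n, where Yₙ is given by the finite continued fraction [Y(b₁), Y(a₁)⁻¹, Y(b₂), Y(a₂)⁻¹, ..., Y(bₙ), Y(aₙ)⁻¹] with Y(aᵢ)(ω) = 1/(j·aᵢ·ω) and Y(bᵢ)(ω) = 1/bᵢ. -/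
/-- Finite continued fraction with complex entries. -/
noncomputable def cfC : List ℂ → ℂ
  | [] => 0
  | [x] => x
  | x :: l => x + (cfC l)⁻¹

/-- Entry list of the depth-`n` fractal R-L ladder continued fraction:
`[Y(b₁), Y(a₁)⁻¹, Y(b₂), Y(a₂)⁻¹, …, Y(bₙ), Y(aₙ)⁻¹]` with
`aᵢ = σ^(i-1)·a₁`, `bᵢ = σ^(1-i)·b₁`, `Y(aᵢ)(ω) = 1/(j·aᵢ·ω)`, `Y(bᵢ)(ω) = 1/bᵢ`. -/
noncomputable def ladderList (σ a₁ b₁ ω : ℝ) (n : ℕ) : List ℂ :=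
  (List.range n).flatMap fun i =>
    [(1 : ℂ) / ((b₁ * σ⁻¹ ^ i : ℝ) : ℂ),
     Complex.I * ((a₁ * σ ^ i : ℝ) : ℂ) * (ω : ℝ)]

lemma cfC_cons (x : ℂ) (l : List ℂ) : cfC (x :: l) = x + (cfC l)⁻¹ := by
  cases l with
  | nil => simp [cfC]
  | cons y t => rfl

lemma ladderList_succ (σ a b ω : ℝ) (n : ℕ) :
    ladderList σ a b ω (n + 1) =
      (1 : ℂ) / (b : ℂ) :: Complex.I * (a : ℂ) * (ω : ℝ) ::
        ladderList σ (σ * a) (σ⁻¹ * b) ω n := by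
  simp only [ladderList, List.range_succ_eq_map, List.flatMap_cons, List.flatMap_map,
    List.cons_append, List.nil_append]
  push_cast
  congr 1
  · ring
  congr 1
  · ring
  congr 1
  funext i
  congr 1
  · rw [pow_succ]; ring
  congr 1
  · rw [pow_succ]; ring

lemma key (σ ω : ℝ) (hσ : σ ≠ 0) (n : ℕ) : ∀ a b : ℝ,
    cfC (ladderList σ (σ * a) (σ⁻¹ * b) ω n) =
      (σ : ℂ) * cfC (ladderList σ a b (σ ^ 2 * ω) n) := by
  induction n with
  | zero => intro a b; simp [ladderList, cfC]
  | succ n ih =>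
    intro a b
    rw [ladderList_succ, ladderList_succ, cfC_cons, cfC_cons, cfC_cons, cfC_cons]
    rw [ih (σ * a) (σ⁻¹ * b)]
    have hσC : (σ : ℂ) ≠ 0 := by exact_mod_cast hσ
    have hbC : (b : ℂ) ≠ 0 ∨ True := Or.inr trivial
    push_cast
    rw [mul_inv]
    set C := cfC (ladderList σ (σ * a) (σ⁻¹ * b) (σ ^ 2 * ω) n) with hC
    have h2 : (Complex.I * (↑σ * ↑a) * ↑ω + (↑σ)⁻¹ * C⁻¹ : ℂ)
        = (↑σ)⁻¹ * (Complex.I * ↑a * ((↑σ : ℂ) ^ 2 * ↑ω) + C⁻¹) := by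
      rw [mul_add]
      congr 1
      field_simp
    rw [h2, mul_inv, inv_inv, mul_add]
    congr 1
    rw [one_div, mul_inv, inv_inv]
    ring
  
theorem fractal_ladder_finite_scaling (σ a₁ b₁ ω : ℝ)
    (hσ : 0 < σ) (ha₁ : 0 < a₁) (hb₁ : 0 < b₁) (hω : 0 < ω) (n : ℕ) (hn : 1 ≤ n) :
    cfC (ladderList σ (σ * a₁) (σ⁻¹ * b₁) ω n) =
      (σ : ℂ) * cfC (ladderList σ a₁ b₁ (σ ^ 2 * ω) n) :=
  key σ ω hσ.ne' n a₁ b₁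
end
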